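/- Every infinite hypothesis class H ⊆ {0,1}^ℕ of total computable hypotheses that is recursively enumerably representable and satisfies Ldim(H) = 1 has the property that every pair (S, x) with S an H-realizable sample and x ∈ ℕ is an optimally significant input; i.e., all optimal online learners for H agree on all H-realizable inputs. -/

import Mathlib

open Classical

variable {X : Type*}

/-- A hypothesis `h` is consistent with a sample `S`. -/
def Consistent (h : X → Bool) (S : List (X × Bool)) : Prop :=
  ∀ p ∈ S, h p.1 = p.2

/-- A sample is realizable by the class `H`. -/
def Realizable (H : Set (X → Bool)) (S : List (X × Bool)) : Prop :=
  ∃ h ∈ H, Consistent h S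

/-- The version space `H_S`. -/
def VS (H : Set (X → Bool)) (S : List (X × Bool)) : Set (X → Bool) :=
  {h ∈ H | Consistent h S}

/-- `H^{(x,r)}`. -/
def Restrict (H : Set (X → Bool)) (x : X) (r : Bool) : Set (X → Bool) :=
  {h ∈ H | h x = r}

/-- `Shatters H d` holds iff there is a complete binary tree of depth `d` shattered by `H`,
equivalently stated recursively. -/
def Shatters (H : Set (X → Bool)) : ℕ → Prop
  | 0 => H.Nonempty
  | d + 1 => ∃ x : X, Shatters (Restrict H x false) d ∧ Shatters (Restrict H x true) d

/-- Littlestone dimension, with `Ldim ∅ = ⊥` (playing the role of `-1`). -/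
noncomputable def Ldim (H : Set (X → Bool)) : WithBot ℕ∞ :=
  ⨆ d ∈ {d : ℕ | Shatters H d}, ((d : ℕ∞) : WithBot ℕ∞)

def MistakesFrom (A : List (X × Bool) → X → Bool) :
    List (X × Bool) → List (X × Bool) → ℕ
  | _, [] => 0
  | pre, p :: rest =>
      (if A pre p.1 ≠ p.2 then 1 else 0) + MistakesFrom A (pre ++ [p]) rest

/-- Number of mistakes that the online learner `A` makes on the sample `S`. -/
def Mistakes (A : List (X × Bool) → X → Bool) (S : List (X × Bool)) : ℕ :=
  MistakesFrom A [] S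

/-- Mistake bound of `A` with respect to `H`. -/
noncomputable def MB (A : List (X × Bool) → X → Bool) (H : Set (X → Bool)) : ℕ∞ :=
  ⨆ S ∈ {S | Realizable H S}, (Mistakes A S : ℕ∞)

/-- `A` is an optimal online learner for `H`. -/
def IsOptimal (A : List (X × Bool) → X → Bool) (H : Set (X → Bool)) : Prop :=
  MB A H = ⨅ B : List (X × Bool) → X → Bool, MB B H

/-- Post-`S` mistake bound of `A` w.r.t. `H`. -/
noncomputable def PostMB (A : List (X × Bool) → X → Bool) (H : Set (X → Bool))
    (S : List (X × Bool)) : ℕ∞ :=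
  ⨆ S' ∈ {S' | Realizable H (S ++ S')}, ((Mistakes A (S ++ S') - Mistakes A S : ℕ) : ℕ∞)

/-- Optimal post-`S` mistake bound. -/
noncomputable def OptPostMB (H : Set (X → Bool)) (S : List (X × Bool)) : ℕ∞ :=
  ⨅ A : List (X × Bool) → X → Bool, PostMB A H S

/-- `A` is anytime optimal for `H`. -/
def AnytimeOptimal (A : List (X × Bool) → X → Bool) (H : Set (X → Bool)) : Prop :=
  ∀ S, Realizable H S → PostMB A H S = OptPostMB H S
/-- The `e`-th partial computable function in the standard numbering by codes. -/
def phi (e : ℕ) : ℕ →. ℕ :=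
  (Denumerable.ofNat Nat.Partrec.Code e).eval

/-- `φ_e(x)↓`. -/
def phiHalts (e x : ℕ) : Prop := (phi e x).Dom

/-- The {0,1}-valued learner induced by a two-place partial computable function:
it predicts `true` exactly when the output converges to `1`. -/
noncomputable def predOf (A : ℕ → ℕ →. ℕ) : List (ℕ × Bool) → ℕ → Bool :=
  fun S x => if 1 ∈ A (Encodable.encode S) x then true else false

/-- `A` is a computable online learner for `H`: a two-place partial computable function
converging with value in {0,1} on every (encoded `H`-realizable sample, point) pair. -/
def IsCOnlineLearner (A : ℕ → ℕ →. ℕ) (H : Set (ℕ → Bool)) : Prop :=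
  Partrec₂ A ∧
    ∀ S : List (ℕ × Bool), Realizable H S → ∀ x : ℕ,
      ∃ y ∈ A (Encodable.encode S) x, y = 0 ∨ y = 1

/-- `H` is recursively enumerably representable: its (0/1-valued, total) members are
exactly the functions computed by an effectively enumerated sequence of codes. -/
def RER (H : Set (ℕ → Bool)) : Prop :=
  ∃ g : ℕ → ℕ, Computable g ∧
    H = {h | ∃ n : ℕ, ∀ x : ℕ,
      phi (g n) x = Part.some (cond (h x) 1 0)}

/-!
Since `Ldim H = 1`, no tree of depth 2 is shattered, so at every point one side of any version
space is a subsingleton; if the version space is infinite, the other side is infinite. A learner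
making at most one mistake must therefore predict the infinite side as long as it has made no
mistake (otherwise the adversary confirms the opposite label, leaving a nontrivial version space in
which a second mistake can be forced), and once it has erred the version space is a singleton whose
value it must predict. Predicting the infinite side does make at most one mistake, so every optimal
learner makes at most one mistake, and its predictions on realizable inputs are therefore
determined.
-/

section VersionSpace

variable {H : Set (X → Bool)}

lemma consistent_append {h : X → Bool} {S T : List (X × Bool)} :
    Consistent h (S ++ T) ↔ Consistent h S ∧ Consistent h T :=
  List.forall_mem_append

lemma VS_nil (H : Set (X → Bool)) : VS H [] = H := by
  ext h
  simp [VS, Consistent]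

lemma VS_append_singleton (H : Set (X → Bool)) (S : List (X × Bool)) (x : X) (r : Bool) :
    VS H (S ++ [(x, r)]) = Restrict (VS H S) x r := by
  ext h
  simp only [VS, Restrict, Set.mem_ofPred_eq, consistent_append]
  simp [Consistent, and_assoc]

lemma realizable_iff_VS_nonempty {S : List (X × Bool)} :
    Realizable H S ↔ (VS H S).Nonempty :=
  Iff.rfl

lemma realizable_append_singleton_iff {S : List (X × Bool)} {x : X} {r : Bool} :
    Realizable H (S ++ [(x, r)]) ↔ ∃ h ∈ VS H S, h x = r := by
  rw [realizable_iff_VS_nonempty, VS_append_singleton]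
  rfl

lemma VS_subset (H : Set (X → Bool)) (S : List (X × Bool)) : VS H S ⊆ H :=
  fun _ hh => hh.1

lemma restrict_subset (H : Set (X → Bool)) (x : X) (r : Bool) : Restrict H x r ⊆ H :=
  fun _ hg => hg.1

lemma restrict_mono {V W : Set (X → Bool)} (hVW : V ⊆ W) (x : X) (r : Bool) :
    Restrict V x r ⊆ Restrict W x r :=
  fun _ hg => ⟨hVW hg.1, hg.2⟩

end VersionSpace

section Shattering

lemma Shatters.mono : ∀ {d : ℕ} {V W : Set (X → Bool)}, V ⊆ W → Shatters V d → Shatters W d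
  | 0, _, _, hVW, h => Set.Nonempty.mono hVW h
  | _ + 1, _, _, hVW, ⟨x, h0, h1⟩ =>
      ⟨x, h0.mono (restrict_mono hVW x false), h1.mono (restrict_mono hVW x true)⟩

lemma shatters_one_of_nontrivial {V : Set (X → Bool)} (hV : V.Nontrivial) : Shatters V 1 := by
  obtain ⟨g, hg, g', hg', hne⟩ := hV
  obtain ⟨x, hx⟩ := Function.ne_iff.1 hne
  have side : ∀ r, ∃ f ∈ V, f x = r := by
    intro r
    by_cases hgr : g x = r
    · exact ⟨g, hg, hgr⟩
    · exact ⟨g', hg', by cases r <;> cases hgx : g x <;> simp_all⟩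
  obtain ⟨f₀, hf₀, hf₀x⟩ := side false
  obtain ⟨f₁, hf₁, hf₁x⟩ := side true
  exact ⟨x, ⟨f₀, hf₀, hf₀x⟩, ⟨f₁, hf₁, hf₁x⟩⟩

lemma Shatters.coe_le_ldim {H : Set (X → Bool)} {d : ℕ} (hd : Shatters H d) :
    ((d : ℕ∞) : WithBot ℕ∞) ≤ Ldim H :=
  le_iSup₂ (f := fun (d : ℕ) (_ : d ∈ {d : ℕ | Shatters H d}) => ((d : ℕ∞) : WithBot ℕ∞)) d hd

lemma not_shatters_two_of_ldim_eq_one {H : Set (X → Bool)}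
    (hld : Ldim H = ((1 : ℕ∞) : WithBot ℕ∞)) : ¬ Shatters H 2 := by
  intro h2
  have := h2.coe_le_ldim
  rw [hld, WithBot.coe_le_coe] at this
  exact absurd (by exact_mod_cast this : (2 : ℕ) ≤ 1) (by decide)

lemma exists_restrict_infinite_of_not_shatters_two {H V : Set (X → Bool)}
    (h2 : ¬ Shatters H 2) (hVH : V ⊆ H) (hV : V.Infinite) (x : X) :
    ∃ b, (Restrict V x b).Infinite ∧ (Restrict V x (!b)).Subsingleton := by
  have hsub : ∀ b, (Restrict V x (!b)).Subsingleton ∨ (Restrict V x b).Subsingleton := by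
    intro b
    by_contra! h
    refine h2 (Shatters.mono hVH ⟨x, ?_, ?_⟩) <;> cases b <;>
      simp_all [shatters_one_of_nontrivial]
  have hcover : ∀ b, V ⊆ Restrict V x b ∪ Restrict V x (!b) := by
    intro b g hg
    cases b <;> cases hgx : g x <;> simp [Restrict, hg, hgx]
  have hinf : ∀ b, (Restrict V x (!b)).Subsingleton → (Restrict V x b).Infinite :=
    fun b hs hfin => hV ((hfin.union hs.finite).subset (hcover b))
  rcases hsub true with hs | hs
  · exact ⟨true, hinf true hs, hs⟩
  · exact ⟨false, hinf false hs, hs⟩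

end Shattering

section Mistakes

variable (A : List (X × Bool) → X → Bool)

lemma mistakesFrom_append_singleton :
    ∀ (pre S : List (X × Bool)) (p : X × Bool),
      MistakesFrom A pre (S ++ [p]) =
        MistakesFrom A pre S + (if A (pre ++ S) p.1 ≠ p.2 then 1 else 0)
  | pre, [], p => by simp [MistakesFrom]
  | pre, q :: S, p => by
      simp only [List.cons_append, MistakesFrom, mistakesFrom_append_singleton (pre ++ [q]) S p,
        List.append_assoc, List.nil_append]
      omega

lemma mistakes_append_singleton (S : List (X × Bool)) (p : X × Bool) :
    Mistakes A (S ++ [p]) = Mistakes A S + (if A S p.1 ≠ p.2 then 1 else 0) :=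
  mistakesFrom_append_singleton A [] S p

lemma MB_le_iff {H : Set (X → Bool)} {n : ℕ} :
    MB A H ≤ n ↔ ∀ S, Realizable H S → Mistakes A S ≤ n := by
  simp only [MB, iSup₂_le_iff, Set.mem_ofPred_eq, Nat.cast_le]

lemma IsOptimal.MB_le {A : List (X × Bool) → X → Bool} {H : Set (X → Bool)} (hA : IsOptimal A H)
    (B : List (X × Bool) → X → Bool) : MB A H ≤ MB B H :=
  hA ▸ iInf_le _ B

end Mistakes

section MistakeBoundOne

variable {H : Set (X → Bool)} {A : List (X × Bool) → X → Bool}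

lemma exists_mistake_of_VS_nontrivial {S : List (X × Bool)} (hS : (VS H S).Nontrivial) :
    ∃ x r, Realizable H (S ++ [(x, r)]) ∧ Mistakes A (S ++ [(x, r)]) = Mistakes A S + 1 := by
  obtain ⟨g, hg, g', hg', hne⟩ := hS
  obtain ⟨x, hx⟩ := Function.ne_iff.1 hne
  obtain ⟨h, hh, hwrong⟩ : ∃ h ∈ VS H S, h x ≠ A S x := by
    by_cases hgx : g x = A S x
    · exact ⟨g', hg', hgx ▸ hx.symm⟩
    · exact ⟨g, hg, hgx⟩
  refine ⟨x, h x, realizable_append_singleton_iff.2 ⟨h, hh, rfl⟩, ?_⟩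
  rw [mistakes_append_singleton, if_pos hwrong.symm]

lemma apply_eq_of_restrict_nontrivial (hA : ∀ T, Realizable H T → Mistakes A T ≤ 1)
    {S : List (X × Bool)} {x : X} {b : Bool} (hS : Mistakes A S = 0)
    (hb : (Restrict (VS H S) x b).Nontrivial) : A S x = b := by
  by_contra hne
  rw [← VS_append_singleton] at hb
  obtain ⟨y, r, hr, hmistake⟩ := exists_mistake_of_VS_nontrivial (A := A) hb
  have := hA _ hr
  rw [hmistake, mistakes_append_singleton, if_pos hne, hS] at this
  omega

lemma apply_eq_of_mistakes_eq_one (hA : ∀ T, Realizable H T → Mistakes A T ≤ 1)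
    {S : List (X × Bool)} {x : X} {r : Bool} (hS : Mistakes A S = 1)
    (hr : Realizable H (S ++ [(x, r)])) : A S x = r := by
  by_contra hne
  have := hA _ hr
  rw [mistakes_append_singleton, if_pos hne, hS] at this
  omega

end MistakeBoundOne

section InfiniteSideLearner

variable {H : Set (X → Bool)}

noncomputable def infiniteSideLearner (H : Set (X → Bool)) : List (X × Bool) → X → Bool :=
  fun S x =>
    if (Restrict (VS H S) x false).Infinite then false
    else decide (Restrict (VS H S) x true).Nonempty

lemma infiniteSideLearner_eq_of_infinite {S : List (X × Bool)} {x : X} {b : Bool}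
    (hb : (Restrict (VS H S) x b).Infinite) (hnb : (Restrict (VS H S) x (!b)).Subsingleton) :
    infiniteSideLearner H S x = b := by
  cases b
  · simp [infiniteSideLearner, hb]
  · simpa [infiniteSideLearner, hb.nonempty] using hnb.finite

lemma infiniteSideLearner_eq_of_subsingleton {S : List (X × Bool)} {x : X} {h : X → Bool}
    (hS : (VS H S).Subsingleton) (hh : h ∈ VS H S) : infiniteSideLearner H S x = h x := by
  have hfalse : ¬ (Restrict (VS H S) x false).Infinite :=
    (hS.anti (restrict_subset _ _ _)).finite.not_infinite
  have htrue : (Restrict (VS H S) x true).Nonempty ↔ h x = true :=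
    ⟨fun ⟨g, hg, hgx⟩ => hS hh hg ▸ hgx, fun hx => ⟨h, hh, hx⟩⟩
  simp only [infiniteSideLearner, if_neg hfalse, htrue, Bool.decide_eq_true]

lemma VS_infinite_or_subsingleton (hH : H.Infinite) (h2 : ¬ Shatters H 2)
    {A : List (X × Bool) → X → Bool}
    (hinf : ∀ S x b, Mistakes A S = 0 → (Restrict (VS H S) x b).Infinite →
      (Restrict (VS H S) x (!b)).Subsingleton → A S x = b)
    (hsub : ∀ S x, ∀ h ∈ VS H S, (VS H S).Subsingleton → Mistakes A S = 1 → A S x = h x)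
    (S : List (X × Bool)) (hS : Realizable H S) :
    (VS H S).Infinite ∧ Mistakes A S = 0 ∨ (VS H S).Subsingleton ∧ Mistakes A S = 1 := by
  induction S using List.reverseRecOn with
  | nil => exact Or.inl ⟨by rwa [VS_nil], rfl⟩
  | append_singleton S p ih =>
    obtain ⟨x, r⟩ := p
    obtain ⟨h, hh, rfl⟩ := realizable_append_singleton_iff.1 hS
    rw [VS_append_singleton, mistakes_append_singleton]
    rcases ih (realizable_iff_VS_nonempty.2 ⟨h, hh⟩) with ⟨hV, h0⟩ | ⟨hV, h1⟩
    · obtain ⟨b, hb, hnb⟩ := exists_restrict_infinite_of_not_shatters_two h2 (VS_subset H S) hV x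
      rw [hinf S x b h0 hb hnb, h0]
      by_cases hhx : h x = b
      · exact Or.inl ⟨hhx ▸ hb, by simp [hhx]⟩
      · have : h x = !b := by cases b <;> simpa using hhx
        exact Or.inr ⟨this ▸ hnb, by simp [Ne.symm hhx]⟩
    · rw [hsub S x h hh hV h1, h1]
      exact Or.inr ⟨hV.anti (restrict_subset _ _ _), by simp⟩

lemma mistakes_infiniteSideLearner_le_one (hH : H.Infinite) (h2 : ¬ Shatters H 2)
    (S : List (X × Bool)) (hS : Realizable H S) : Mistakes (infiniteSideLearner H) S ≤ 1 := by
  rcases VS_infinite_or_subsingleton hH h2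
      (fun _ _ _ _ => infiniteSideLearner_eq_of_infinite)
      (fun _ _ _ hh hV _ => infiniteSideLearner_eq_of_subsingleton hV hh) S hS with
    ⟨_, h0⟩ | ⟨_, h1⟩ <;> omega

lemma apply_eq_infiniteSideLearner (hH : H.Infinite) (h2 : ¬ Shatters H 2)
    {A : List (X × Bool) → X → Bool} (hA : ∀ T, Realizable H T → Mistakes A T ≤ 1)
    {S : List (X × Bool)} (hS : Realizable H S) (x : X) :
    A S x = infiniteSideLearner H S x := by
  rcases VS_infinite_or_subsingleton hH h2
      (fun _ _ _ h0 hb _ => apply_eq_of_restrict_nontrivial hA h0 hb.nontrivial)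
      (fun _ _ _ hh _ h1 => apply_eq_of_mistakes_eq_one hA h1
        (realizable_append_singleton_iff.2 ⟨_, hh, rfl⟩)) S hS with
    ⟨hV, h0⟩ | ⟨hV, h1⟩
  · obtain ⟨b, hb, hnb⟩ := exists_restrict_infinite_of_not_shatters_two h2 (VS_subset H S) hV x
    rw [apply_eq_of_restrict_nontrivial hA h0 hb.nontrivial,
      infiniteSideLearner_eq_of_infinite hb hnb]
  · obtain ⟨h, hh⟩ := realizable_iff_VS_nonempty.1 hS
    rw [apply_eq_of_mistakes_eq_one hA h1 (realizable_append_singleton_iff.2 ⟨h, hh, rfl⟩),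
      infiniteSideLearner_eq_of_subsingleton hV hh]

end InfiniteSideLearner

theorem stmt11_general (H : Set (ℕ → Bool)) (hinf : H.Infinite)
    (hld : Ldim H = ((1 : ℕ∞) : WithBot ℕ∞)) :
    ∀ (S : List (ℕ × Bool)) (x : ℕ), Realizable H S →
      ∀ A A' : List (ℕ × Bool) → ℕ → Bool,
        IsOptimal A H → IsOptimal A' H → A S x = A' S x := by
  intro S x hS A A' hA hA'
  have h2 := not_shatters_two_of_ldim_eq_one hld
  have mistakes_le_one : ∀ B, IsOptimal B H → ∀ T, Realizable H T → Mistakes B T ≤ 1 :=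
    fun B hB => (MB_le_iff B).1 <| (hB.MB_le _).trans <|
      (MB_le_iff _).2 (mistakes_infiniteSideLearner_le_one hinf h2)
  rw [apply_eq_infiniteSideLearner hinf h2 (mistakes_le_one A hA) hS,
    apply_eq_infiniteSideLearner hinf h2 (mistakes_le_one A' hA') hS]

/-- for every infinite RER class of computable hypotheses with
`Ldim(H) = 1`, every realizable input is optimally significant: all optimal online
learners agree on all `H`-realizable inputs. -/
theorem stmt11 (H : Set (ℕ → Bool)) (hinf : H.Infinite)
    (hcomp : ∀ h ∈ H, Computable h) (hrer : RER H)
    (hld : Ldim H = ((1 : ℕ∞) : WithBot ℕ∞)) :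
    ∀ (S : List (ℕ × Bool)) (x : ℕ), Realizable H S →
      ∀ A A' : List (ℕ × Bool) → ℕ → Bool,
        IsOptimal A H → IsOptimal A' H → A S x = A' S x :=
  stmt11_general H hinf hld
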